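/- arXiv:2303.05129 — 2 statements merged into one kernel-verified Lean document; each statement's English description precedes it below -/
import Mathlib

section
/- (Characterization of L_i.) Let i ≥ 0. A basis element (Λ, k) belongs to L_i if and only if both: (a) n − k ≤ WD(Λ, k) < r_i, and (b) lev_i(Λ, k) = i. -/
/-- Weight of a partition (finitely supported sequence of multiplicities). -/
def wt (Λ : ℕ →₀ ℕ) : ℕ := Λ.sum fun m c => m * c

/-- Degree (number of parts, with multiplicity) of a partition. -/
def deg (Λ : ℕ →₀ ℕ) : ℕ := Λ.sum fun _ c => c

/-- Basis element of the integral Lie ring of partitions: a pair (Λ, k) with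
1 ≤ k ≤ n and all parts of Λ in {1,…,k-1}. -/
def IsBasisElt (n : ℕ) (Λ : ℕ →₀ ℕ) (k : ℕ) : Prop :=
  1 ≤ k ∧ k ≤ n ∧ Λ 0 = 0 ∧ ∀ m, k ≤ m → Λ m = 0

/-- The weight-degree function. -/
def WD (n : ℕ) (Λ : ℕ →₀ ℕ) (k : ℕ) : ℤ :=
  (wt Λ : ℤ) - (deg Λ : ℤ) + (n : ℤ) - (k : ℤ)

/-- h_i = ⌊(i-1)/(n-1)⌋ + 1. -/
def hh (n : ℕ) (i : ℤ) : ℤ := (i - 1).fdiv ((n : ℤ) - 1) + 1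

/-- r_i = i - (h_i - 1)(n-1). -/
def rr (n : ℕ) (i : ℤ) : ℤ := i - (hh n i - 1) * ((n : ℤ) - 1)

/-- The i-th level function lev_i(Λ,k) = h_i·WD(Λ,k) + deg(Λ) - 1. -/
def lev (n : ℕ) (i : ℤ) (Λ : ℕ →₀ ℕ) (k : ℕ) : ℤ :=
  hh n i * WD n Λ k + (deg Λ : ℤ) - 1

/-- N_i = set of basis elements with lev_j ≤ j for some -1 ≤ j ≤ i. -/
def Nset (n : ℕ) (i : ℤ) : Set ((ℕ →₀ ℕ) × ℕ) :=
  {p | IsBasisElt n p.1 p.2 ∧ ∃ j : ℤ, -1 ≤ j ∧ j ≤ i ∧ lev n j p.1 p.2 ≤ j}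

/-- L_i = set of basis elements for which i is the least index j ≥ -1 with lev_j = j. -/
def Lset (n : ℕ) (i : ℤ) : Set ((ℕ →₀ ℕ) × ℕ) :=
  {p | IsBasisElt n p.1 p.2 ∧ lev n i p.1 p.2 = i ∧
    ∀ j : ℤ, -1 ≤ j → lev n j p.1 p.2 = j → i ≤ j}

/-- The partition function p(s). -/
def pfun (s : ℕ) : ℕ := Fintype.card (Nat.Partition s)

/-- b_m = Σ_{s=0}^m p(s). -/
def bnat (m : ℕ) : ℕ := ∑ s ∈ Finset.range (m + 1), pfun s

/-- c_m = Σ_{s=0}^m b_s. -/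
def cnat (m : ℕ) : ℕ := ∑ s ∈ Finset.range (m + 1), bnat s

/-- b extended to ℤ, with b_m = 0 for m < 0. -/
def bint (m : ℤ) : ℕ := if m < 0 then 0 else bnat m.toNat

/-- The period map per(Λ,k) = (Λ + (n-1-WD(Λ,k))·e₁, k). -/
noncomputable def per (n : ℕ) (p : (ℕ →₀ ℕ) × ℕ) : (ℕ →₀ ℕ) × ℕ :=
  (p.1 + Finsupp.single 1 (((n : ℤ) - 1 - WD n p.1 p.2).toNat), p.2)


/-!
Write `m = n - 1` and `W = WD(Λ,k)`, so `i = (h_i - 1) m + r_i` and `lev_i = h_i W + deg Λ - 1`.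
For a basis element `n - k ≤ W`, and `W ≤ n - 2` when `Λ` has a single part.

If `W < r_i` and `lev_i = lev_j = j` with `j < i`, then `(h_i - h_j) W = i - j > 0` forces
`h_i > h_j`, and `(h_i - h_j)(W - m) = r_i - r_j` then gives `r_i ≤ W`, a contradiction.

Conversely, if `lev_i = i` but `r_i ≤ W`, then either `Λ = ∅` and `lev_{-1} = -1`, or `W < m`,
so that `j = i - W` has `h_j = h_i - 1` and hence `lev_j = lev_i - W = j`, with `-1 ≤ j < i`.
-/

section Indices

theorem hh_sub_one_mul_add_rr (n : ℕ) (i : ℤ) : (hh n i - 1) * ((n : ℤ) - 1) + rr n i = i := by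
  unfold rr; ring

variable {n : ℕ}

theorem hh_eq_ediv_add_one (hn : 2 ≤ n) (i : ℤ) : hh n i = (i - 1) / ((n : ℤ) - 1) + 1 := by
  rw [hh, Int.fdiv_eq_ediv_of_nonneg _ (by omega)]

theorem rr_eq_emod_add_one (hn : 2 ≤ n) (i : ℤ) : rr n i = (i - 1) % ((n : ℤ) - 1) + 1 := by
  rw [rr, hh_eq_ediv_add_one hn, Int.emod_def]; ring

theorem one_le_rr (hn : 2 ≤ n) (i : ℤ) : 1 ≤ rr n i := by
  have := Int.emod_nonneg (i - 1) (show (n : ℤ) - 1 ≠ 0 by omega)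
  rw [rr_eq_emod_add_one hn]; omega

theorem rr_le (hn : 2 ≤ n) (i : ℤ) : rr n i ≤ (n : ℤ) - 1 := by
  have := Int.emod_lt_of_pos (i - 1) (show 0 < (n : ℤ) - 1 by omega)
  rw [rr_eq_emod_add_one hn]; omega

theorem hh_sub_one_mul_add (hn : 2 ≤ n) (h : ℤ) {r : ℤ} (hr₁ : 1 ≤ r) (hr₂ : r ≤ (n : ℤ) - 1) :
    hh n ((h - 1) * ((n : ℤ) - 1) + r) = h := by
  rw [hh_eq_ediv_add_one hn, show (h - 1) * ((n : ℤ) - 1) + r - 1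
      = (r - 1) + (h - 1) * ((n : ℤ) - 1) by ring,
    Int.add_mul_ediv_right _ _ (by omega), Int.ediv_eq_zero_of_lt (by omega) (by omega)]
  ring

theorem hh_neg_one (hn : 3 ≤ n) : hh n (-1) = 0 := by
  simpa using hh_sub_one_mul_add (n := n) (by omega) 0 (r := (n : ℤ) - 2) (by omega) (by omega)

theorem hh_nonneg (hn : 2 ≤ n) {i : ℤ} (hi : 0 ≤ i) : 0 ≤ hh n i := by
  have : -1 ≤ (i - 1) / ((n : ℤ) - 1) := by
    rw [Int.le_ediv_iff_mul_le (by omega)]; omega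
  rw [hh_eq_ediv_add_one hn]; omega

end Indices

section Partitions

theorem deg_le_wt {Λ : ℕ →₀ ℕ} (h0 : Λ 0 = 0) : deg Λ ≤ wt Λ := by
  refine Finset.sum_le_sum fun m hm => Nat.le_mul_of_pos_left _ (Nat.pos_of_ne_zero ?_)
  rintro rfl
  exact Finsupp.mem_support_iff.mp hm h0

theorem wt_le_mul_deg {Λ : ℕ →₀ ℕ} {k : ℕ} (hk : ∀ m, k ≤ m → Λ m = 0) :
    wt Λ ≤ (k - 1) * deg Λ := by
  rw [deg, Finsupp.sum, Finset.mul_sum]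
  refine Finset.sum_le_sum fun m hm => Nat.mul_le_mul_right _ ?_
  by_contra! h
  exact Finsupp.mem_support_iff.mp hm (hk m (by omega))

variable {n k : ℕ} {Λ : ℕ →₀ ℕ}

theorem sub_le_WD (hb : IsBasisElt n Λ k) : (n : ℤ) - k ≤ WD n Λ k := by
  have : (deg Λ : ℤ) ≤ wt Λ := by exact_mod_cast deg_le_wt hb.2.2.1
  unfold WD; omega

theorem WD_le (hb : IsBasisElt n Λ k) :
    WD n Λ k ≤ ((k : ℤ) - 2) * deg Λ + n - k := by
  have : (wt Λ : ℤ) ≤ ((k : ℤ) - 1) * deg Λ := by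
    have := wt_le_mul_deg hb.2.2.2
    zify [hb.1] at this; exact this
  unfold WD; linarith

end Partitions

section Levels

variable {n k : ℕ} {Λ : ℕ →₀ ℕ} {i j : ℤ}

theorem le_of_lev_eq_self_of_WD_lt_rr (hn : 2 ≤ n) (hW : 0 ≤ WD n Λ k) (hWr : WD n Λ k < rr n i)
    (hlevi : lev n i Λ k = i) (hlevj : lev n j Λ k = j) : i ≤ j := by
  by_contra! hji
  unfold lev at hlevi hlevj
  have hdiff : (hh n i - hh n j) * WD n Λ k = i - j := by linear_combination hlevi - hlevj
  have hh_lt : hh n j < hh n i := by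
    by_contra! h
    nlinarith
  have hrr : (hh n i - hh n j) * (WD n Λ k - ((n : ℤ) - 1)) = rr n i - rr n j := by
    linear_combination hlevi - hlevj + hh_sub_one_mul_add_rr n j - hh_sub_one_mul_add_rr n i
  nlinarith [rr_le hn j, one_le_rr hn j, mul_nonneg (show 0 ≤ hh n i - hh n j - 1 by omega)
    (show 0 ≤ (n : ℤ) - 1 - WD n Λ k by linarith [rr_le hn i])]

theorem exists_lev_eq_self_of_rr_le_WD (hn : 3 ≤ n) (hi : 0 ≤ i) (hb : IsBasisElt n Λ k)
    (hlev : lev n i Λ k = i) (hWr : rr n i ≤ WD n Λ k) :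
    ∃ j, -1 ≤ j ∧ j < i ∧ lev n j Λ k = j := by
  have hdecomp := hh_sub_one_mul_add_rr n i
  have hr₁ := one_le_rr (by omega : 2 ≤ n) i
  have hr₂ := rr_le (by omega : 2 ≤ n) i
  have hh₀ := hh_nonneg (by omega : 2 ≤ n) hi
  obtain hd | hd := Nat.eq_zero_or_pos (deg Λ)
  · exact ⟨-1, le_rfl, by omega, by simp [lev, hh_neg_one hn, hd]⟩
  unfold lev at hlev
  have hkey : hh n i * (WD n Λ k - ((n : ℤ) - 1)) = rr n i - ((n : ℤ) - 1) - deg Λ + 1 := by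
    linear_combination hlev - hdecomp
  have hW : WD n Λ k ≤ (n : ℤ) - 2 := by
    by_contra! hW
    have hd1 : (deg Λ : ℤ) = 1 := by
      nlinarith [mul_nonneg hh₀ (show 0 ≤ WD n Λ k - ((n : ℤ) - 1) by omega)]
    have := WD_le hb
    rw [hd1] at this
    omega
  have hh₁ : 1 ≤ hh n i := by
    by_contra! h
    rw [show hh n i = 0 by omega] at hdecomp
    omega
  have hhj : hh n (i - WD n Λ k) = hh n i - 1 := by
    rw [← hh_sub_one_mul_add (n := n) (by omega) (hh n i - 1) (r := rr n i - WD n Λ k + (n - 1))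
      (by omega) (by omega)]
    congr 1
    linear_combination -hdecomp
  have hlevj : lev n (i - WD n Λ k) Λ k = i - WD n Λ k := by
    rw [lev, hhj]; linear_combination hlev
  refine ⟨i - WD n Λ k, ?_, by omega, hlevj⟩
  nlinarith

end Levels

theorem stmt11 (n : ℕ) (hn : 3 ≤ n) (i : ℤ) (hi : 0 ≤ i) (Λ : ℕ →₀ ℕ) (k : ℕ)
    (hb : IsBasisElt n Λ k) :
    (Λ, k) ∈ Lset n i ↔
      ((n : ℤ) - k ≤ WD n Λ k ∧ WD n Λ k < rr n i) ∧ lev n i Λ k = i := by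
  constructor
  · rintro ⟨-, hlev, hmin⟩
    refine ⟨⟨sub_le_WD hb, lt_of_not_ge fun hWr => ?_⟩, hlev⟩
    obtain ⟨j, hj, hji, hlevj⟩ := exists_lev_eq_self_of_rr_le_WD hn hi hb hlev hWr
    exact (hmin j hj hlevj).not_gt hji
  · rintro ⟨⟨hW, hWr⟩, hlev⟩
    have hW₀ : 0 ≤ WD n Λ k := by have := hb.2.1; omega
    exact ⟨hb, hlev, fun j _ hlevj => le_of_lev_eq_self_of_WD_lt_rr (by omega) hW₀ hWr hlev hlevj⟩
end

section
/- Fix j ≥ 1 and integers 1 ≤ ℓ < u ≤ n. Let Θ be the exponent of the monomial x_1^{(h_j−1)(u−ℓ)} x_ℓ. Then for s = (h_j − 1)(n − 1), one has lev_s(Θ, u) = s; in particular (Θ, u) ∈ N_s ⊆ N_{j−1} whenever s ≤ j − 1. -/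
lemma wt_add' (A B : ℕ →₀ ℕ) : wt (A + B) = wt A + wt B := by
  unfold wt
  exact Finsupp.sum_add_index (fun m _ => by simp) (fun m _ b₁ b₂ => by ring)

lemma wt_single' (m c : ℕ) : wt (Finsupp.single m c) = m * c := by
  unfold wt
  rw [Finsupp.sum_single_index]; simp

lemma deg_add' (A B : ℕ →₀ ℕ) : deg (A + B) = deg A + deg B := by
  unfold deg
  apply Finsupp.sum_add_index <;> intros <;> simp

lemma deg_single' (m c : ℕ) : deg (Finsupp.single m c) = c := by
  unfold deg
  rw [Finsupp.sum_single_index]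
  simp

lemma hh_eq (n : ℕ) (hn : 3 ≤ n) (a : ℤ) : hh n (a * ((n : ℤ) - 1)) = a := by
  have hc : (0:ℤ) < (n:ℤ) - 1 := by
    have : (3:ℤ) ≤ (n:ℤ) := by exact_mod_cast hn
    omega
  have hkey : (a * ((n : ℤ) - 1) - 1) = ((n:ℤ) - 2) + (a - 1) * ((n:ℤ) - 1) := by ring
  unfold hh
  rw [hkey, Int.fdiv_eq_ediv_of_nonneg _ hc.le, Int.add_mul_ediv_right _ _ (by omega : (n:ℤ) - 1 ≠ 0),
    Int.ediv_eq_zero_of_lt (by omega) (by omega)]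
  ring

theorem stmt17 (n : ℕ) (hn : 3 ≤ n) (j : ℤ) (hj : 1 ≤ j) (ℓ u : ℕ)
    (hℓ : 1 ≤ ℓ) (hℓu : ℓ < u) (hun : u ≤ n) :
    lev n ((hh n j - 1) * ((n : ℤ) - 1))
      (Finsupp.single 1 (((hh n j - 1) * ((u : ℤ) - (ℓ : ℤ))).toNat) + Finsupp.single ℓ 1) u
      = (hh n j - 1) * ((n : ℤ) - 1) ∧
    ((hh n j - 1) * ((n : ℤ) - 1) ≤ j - 1 →
      (Finsupp.single 1 (((hh n j - 1) * ((u : ℤ) - (ℓ : ℤ))).toNat) + Finsupp.single ℓ 1, u)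
        ∈ Nset n (j - 1)) := by
  set a : ℤ := hh n j - 1 with ha
  have ha0 : 0 ≤ a := by
    have : 0 ≤ (j - 1).fdiv ((n:ℤ) - 1) := by
      apply Int.fdiv_nonneg (by omega)
      have : (3:ℤ) ≤ (n:ℤ) := by exact_mod_cast hn
      omega
    simp only [ha, hh]; omega
  set t : ℕ := ((hh n j - 1) * ((u : ℤ) - (ℓ : ℤ))).toNat with ht
  have htc : (t : ℤ) = a * ((u : ℤ) - (ℓ : ℤ)) := by
    rw [ht, Int.toNat_of_nonneg]
    have hul : (0:ℤ) ≤ (u:ℤ) - (ℓ:ℤ) := by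
      have : (ℓ:ℤ) < (u:ℤ) := by exact_mod_cast hℓu
      omega
    exact mul_nonneg ha0 hul
  set Θ : ℕ →₀ ℕ := Finsupp.single 1 t + Finsupp.single ℓ 1 with hΘ
  have hwt : wt Θ = t + ℓ := by
    rw [hΘ, wt_add', wt_single', wt_single']; ring
  have hdeg : deg Θ = t + 1 := by
    rw [hΘ, deg_add', deg_single', deg_single']
  have hWD : WD n Θ u = (ℓ:ℤ) - 1 + (n:ℤ) - (u:ℤ) := by
    unfold WD
    rw [hwt, hdeg]
    push_cast
    ring
  have hlev : lev n (a * ((n : ℤ) - 1)) Θ u = a * ((n : ℤ) - 1) := by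
    unfold lev
    rw [hh_eq n hn a, hWD, hdeg]
    push_cast
    rw [htc]
    ring
  refine ⟨hlev, fun hle => ?_⟩
  refine ⟨⟨by omega, hun, ?_, ?_⟩, a * ((n : ℤ) - 1), ?_, hle, le_of_eq hlev⟩
  · simp [hΘ, Finsupp.single_apply]
    omega
  · intro m hm
    simp [hΘ, Finsupp.single_apply]
    constructor <;> intro h <;> omega
  · have hc : (0:ℤ) ≤ (n:ℤ) - 1 := by
      have : (3:ℤ) ≤ (n:ℤ) := by exact_mod_cast hn
      omega
    have := mul_nonneg ha0 hc
    omega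
end
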